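/- (Magic robustness lower bound for the T state via an explicit witness.) Let X, Y, Z denote the 2×2 Pauli matrices, let |T⟩ = (|0⟩ + e^{iπ/4}|1⟩)/√2, and let L_stab be the convex hull of the six single-qubit pure stabilizer states, i.e., the projectors onto the normalized eigenvectors of X, Y, and Z (namely |0⟩⟨0|, |1⟩⟨1|, |+⟩⟨+|, |−⟩⟨−|, |+i⟩⟨+i|, |−i⟩⟨−i|). Let Y₁ = (I + (X+Y)/√2)/(1 + 1/√2). Then: (i) Y₁ is positive semidefinite; (ii) Re Tr[Y₁ σ] ≤ 1 for every σ ∈ L_stab; (iii) Re Tr[Y₁ |T⟩⟨T|] = 4 − 2√2; and consequently (iv) the generalized robustness of magic satisfies R_{L_stab}(|T⟩⟨T|) ≥ 3 − 2√2. -/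

import Mathlib

/-!
The witness is the `T` projector itself, rescaled: `(I + (X + Y)/√2)/2` is the Bloch form of
`|T⟩⟨T|`, so `Y₁ = (4 - 2√2) |T⟩⟨T|`. Hence `Y₁ ⪰ 0` and `Tr[Y₁ |T⟩⟨T|] = 4 - 2√2`. On each pure
stabilizer state `Re Tr[(X + Y) σ] ≤ 1`, which is exactly what the normalisation `1 + 1/√2` is
chosen to absorb, so `Re Tr[Y₁ σ] ≤ 1` on the six vertices and, by linearity, on their convex hull.
If `(ρ + s γ)/(1 + s)` is a stabilizer state, then `Re Tr[Y₁ γ] ≥ 0` gives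
`Re Tr[Y₁ ρ] ≤ Re Tr[Y₁ (ρ + s γ)] ≤ 1 + s`, i.e. `s ≥ Re Tr[Y₁ ρ] - 1`.
-/

open Matrix ComplexOrder

/-- A density matrix: positive semidefinite with unit trace. -/
def IsDensityMatrix {n : Type*} [Fintype n] (ρ : Matrix n n ℂ) : Prop :=
  ρ.PosSemidef ∧ ρ.trace = 1

/-- The generalized robustness of `ρ` with respect to the free set `L`. -/
noncomputable def robustness {n : Type*} [Fintype n]
    (L : Set (Matrix n n ℂ)) (ρ : Matrix n n ℂ) : ℝ :=
  sInf { s : ℝ | 0 ≤ s ∧ ∃ γ : Matrix n n ℂ, IsDensityMatrix γ ∧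
    (1 + s)⁻¹ • (ρ + s • γ) ∈ L }

/-- The Pauli `X` matrix. -/
def pauliX : Matrix (Fin 2) (Fin 2) ℂ := !![0, 1; 1, 0]

/-- The Pauli `Y` matrix. -/
def pauliY : Matrix (Fin 2) (Fin 2) ℂ := !![0, -Complex.I; Complex.I, 0]

/-- The six single-qubit pure stabilizer states: projectors onto the normalized
eigenvectors of the Pauli matrices `X`, `Y`, `Z`. -/
noncomputable def stabilizerProjectors : Set (Matrix (Fin 2) (Fin 2) ℂ) :=
  { !![1, 0; 0, 0], !![0, 0; 0, 1],
    !![1/2, 1/2; 1/2, 1/2], !![1/2, -(1/2); -(1/2), 1/2],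
    !![1/2, -Complex.I/2; Complex.I/2, 1/2], !![1/2, Complex.I/2; -Complex.I/2, 1/2] }

/-- The set of single-qubit stabilizer states: the convex hull (over `ℝ`) of the
six pure stabilizer states. -/
noncomputable def stabSet : Set (Matrix (Fin 2) (Fin 2) ℂ) :=
  convexHull ℝ stabilizerProjectors

/-- The witness `Y₁ = (I + (X+Y)/√2)/(1 + 1/√2)`. -/
noncomputable def magicWitness : Matrix (Fin 2) (Fin 2) ℂ :=
  ((1 + 1 / Real.sqrt 2 : ℝ))⁻¹ •
    ((1 : Matrix (Fin 2) (Fin 2) ℂ) + (Real.sqrt 2 : ℝ)⁻¹ • (pauliX + pauliY))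

/-- The projector `|T⟩⟨T|` onto the `T` state `|T⟩ = (|0⟩ + e^{iπ/4}|1⟩)/√2`. -/
noncomputable def Tproj : Matrix (Fin 2) (Fin 2) ℂ :=
  vecMulVec ![1 / (Real.sqrt 2 : ℂ), Complex.exp (Complex.I * (Real.pi / 4 : ℂ)) / (Real.sqrt 2 : ℂ)]
    (star ![1 / (Real.sqrt 2 : ℂ), Complex.exp (Complex.I * (Real.pi / 4 : ℂ)) / (Real.sqrt 2 : ℂ)])

def robustnessFeasible {n : Type*} [Fintype n] (L : Set (Matrix n n ℂ)) (ρ : Matrix n n ℂ) :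
    Set ℝ :=
  { s : ℝ | 0 ≤ s ∧ ∃ γ : Matrix n n ℂ, IsDensityMatrix γ ∧ (1 + s)⁻¹ • (ρ + s • γ) ∈ L }

namespace Matrix

variable {n : Type*} [Fintype n]

open scoped MatrixOrder in
theorem PosSemidef.trace_mul_nonneg {A B : Matrix n n ℂ} (hA : A.PosSemidef) (hB : B.PosSemidef) :
    0 ≤ (A * B).trace := by
  classical
  have hS : (CFC.sqrt A)ᴴ = CFC.sqrt A := (CFC.sqrt_nonneg A).posSemidef.isHermitian.eq
  rw [← CFC.sqrt_mul_sqrt_self A hA.nonneg, Matrix.mul_assoc, trace_mul_comm]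
  simpa only [hS] using (hB.mul_mul_conjTranspose_same (CFC.sqrt A)).trace_nonneg

theorem re_trace_mul_le_of_mem_convexHull {A : Matrix n n ℂ} {S : Set (Matrix n n ℂ)} {c : ℝ}
    (hS : ∀ σ ∈ S, (A * σ).trace.re ≤ c) : ∀ σ ∈ convexHull ℝ S, (A * σ).trace.re ≤ c :=
  convexHull_min hS <| convex_halfSpace_le
    ⟨fun σ τ ↦ by simp [Matrix.mul_add], fun r σ ↦ by simp [Matrix.mul_smul]⟩ c

theorem vecMulVec_self_star_mul_self {v : n → ℂ} (hv : star v ⬝ᵥ v = 1) :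
    vecMulVec v (star v) * vecMulVec v (star v) = vecMulVec v (star v) := by
  rw [vecMulVec_mul_vecMulVec, hv, one_smul]

theorem trace_vecMulVec_self_star {v : n → ℂ} (hv : star v ⬝ᵥ v = 1) :
    (vecMulVec v (star v)).trace = 1 := by
  rw [trace_vecMulVec, dotProduct_comm, hv]

open scoped MatrixOrder in
theorem posSemidef_one_sub_vecMulVec_self_star [DecidableEq n] {v : n → ℂ}
    (hv : star v ⬝ᵥ v = 1) : (1 - vecMulVec v (star v)).PosSemidef :=
  IsStarProjection.one_sub_nonneg ⟨vecMulVec_self_star_mul_self hv,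
    by simp [IsSelfAdjoint, star_eq_conjTranspose, conjTranspose_vecMulVec]⟩ |>.posSemidef

end Matrix

/-- The feasibility hypothesis is essential: `robustness L ρ = sInf ∅ = 0` when no decomposition
exists. -/
theorem robustness_ge_of_witness {n : Type*} [Fintype n] {L : Set (Matrix n n ℂ)}
    {ρ W : Matrix n n ℂ} (hW : W.PosSemidef) (hWL : ∀ σ ∈ L, (W * σ).trace.re ≤ 1)
    (hfeas : (robustnessFeasible L ρ).Nonempty) :
    (W * ρ).trace.re - 1 ≤ robustness L ρ := by
  refine le_csInf hfeas ?_
  rintro s ⟨hs, γ, ⟨hγ, -⟩, hmem⟩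
  have hWγ : 0 ≤ (W * γ).trace.re := (Complex.le_def.1 (hW.trace_mul_nonneg hγ)).1
  have hbound := hWL _ hmem
  rw [Matrix.mul_smul, Matrix.mul_add, Matrix.mul_smul, trace_smul, trace_add, trace_smul,
    Complex.smul_re, Complex.add_re, Complex.smul_re, smul_eq_mul, smul_eq_mul,
    inv_mul_le_iff₀ (by linarith)] at hbound
  nlinarith

/-- Mixing a pure qubit state with its orthogonal complement gives the maximally mixed state. -/
theorem one_mem_robustnessFeasible_of_pure_qubit {L : Set (Matrix (Fin 2) (Fin 2) ℂ)}
    {v : Fin 2 → ℂ} (hv : star v ⬝ᵥ v = 1)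
    (hL : (1 / 2 : ℝ) • (1 : Matrix (Fin 2) (Fin 2) ℂ) ∈ L) :
    1 ∈ robustnessFeasible L (vecMulVec v (star v)) := by
  refine ⟨zero_le_one, 1 - vecMulVec v (star v),
    ⟨posSemidef_one_sub_vecMulVec_self_star hv, ?_⟩, ?_⟩
  · rw [trace_sub, trace_one, trace_vecMulVec_self_star hv]
    norm_num
  · convert hL using 2 <;> norm_num

theorem half_smul_one_mem_stabSet : (1 / 2 : ℝ) • (1 : Matrix (Fin 2) (Fin 2) ℂ) ∈ stabSet := by
  have h : (1 / 2 : ℝ) • (1 : Matrix (Fin 2) (Fin 2) ℂ) =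
      (1 / 2 : ℝ) • !![1, 0; 0, 0] + (1 / 2 : ℝ) • !![0, 0; 0, 1] := by
    ext i j; fin_cases i <;> fin_cases j <;> simp
  rw [h]
  exact convex_convexHull ℝ _ (subset_convexHull ℝ _ (by simp [stabilizerProjectors]))
    (subset_convexHull ℝ _ (by simp [stabilizerProjectors])) (by norm_num) (by norm_num)
    (by norm_num)

theorem Complex.ofReal_sqrt_two_sq : ((Real.sqrt 2 : ℝ) : ℂ) ^ 2 = 2 := by
  exact_mod_cast Real.sq_sqrt zero_le_two

theorem Complex.exp_I_mul_pi_div_four :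
    Complex.exp (Complex.I * (Real.pi / 4 : ℂ)) = (1 + Complex.I) / (Real.sqrt 2 : ℂ) := by
  have h : Complex.I * (Real.pi / 4 : ℂ) = ((Real.pi / 4 : ℝ) : ℂ) * Complex.I := by
    push_cast; ring
  rw [h, Complex.exp_mul_I, ← Complex.ofReal_cos, ← Complex.ofReal_sin, Real.cos_pi_div_four,
    Real.sin_pi_div_four, eq_div_iff (by simp)]
  push_cast
  linear_combination (1 + Complex.I) / 2 * Complex.ofReal_sqrt_two_sq

noncomputable def tState : Fin 2 → ℂ :=
  ![1 / (Real.sqrt 2 : ℂ), Complex.exp (Complex.I * (Real.pi / 4 : ℂ)) / (Real.sqrt 2 : ℂ)]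

theorem Tproj_eq_vecMulVec : Tproj = vecMulVec tState (star tState) :=
  rfl

theorem tState_eq : tState = ![1 / (Real.sqrt 2 : ℂ), (1 + Complex.I) / 2] := by
  rw [tState, Complex.exp_I_mul_pi_div_four, div_div, ← sq, Complex.ofReal_sqrt_two_sq]

theorem star_tState_dotProduct_self : star tState ⬝ᵥ tState = 1 := by
  simp [tState_eq, dotProduct, Fin.sum_univ_two, Complex.conj_ofReal, map_ofNat]
  field_simp
  ring_nf
  norm_num [Complex.ofReal_sqrt_two_sq]

theorem Tproj_eq_half_smul :
    Tproj = (1 / 2 : ℝ) • (1 + (Real.sqrt 2 : ℝ)⁻¹ • (pauliX + pauliY)) := by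
  ext i j
  fin_cases i <;> fin_cases j <;>
    simp [Tproj_eq_vecMulVec, tState_eq, pauliX, pauliY, Complex.conj_ofReal] <;>
    field_simp <;> ring_nf <;> norm_num [Complex.ofReal_sqrt_two_sq]

theorem magicWitness_eq_smul_Tproj : magicWitness = (4 - 2 * Real.sqrt 2 : ℝ) • Tproj := by
  rw [Tproj_eq_half_smul, smul_smul, magicWitness]
  congr 1
  have h := Real.mul_self_sqrt (zero_le_two (α := ℝ))
  have hpos := Real.sqrt_pos.2 (zero_lt_two (α := ℝ))
  field_simp
  nlinarith

theorem trace_eq_one_of_mem_stabilizerProjectors {σ : Matrix (Fin 2) (Fin 2) ℂ}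
    (hσ : σ ∈ stabilizerProjectors) : σ.trace = 1 := by
  simp only [stabilizerProjectors, Set.mem_insert_iff, Set.mem_singleton_iff] at hσ
  rcases hσ with rfl | rfl | rfl | rfl | rfl | rfl <;> simp [trace_fin_two] <;> ring

theorem re_trace_pauliX_add_pauliY_mul_le_one {σ : Matrix (Fin 2) (Fin 2) ℂ}
    (hσ : σ ∈ stabilizerProjectors) : ((pauliX + pauliY) * σ).trace.re ≤ 1 := by
  simp only [stabilizerProjectors, Set.mem_insert_iff, Set.mem_singleton_iff] at hσ
  rcases hσ with rfl | rfl | rfl | rfl | rfl | rfl <;>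
    simp [pauliX, pauliY, trace_fin_two] <;> norm_num

theorem re_trace_magicWitness_mul_le_one {σ : Matrix (Fin 2) (Fin 2) ℂ}
    (hσ : σ ∈ stabilizerProjectors) : (magicWitness * σ).trace.re ≤ 1 := by
  have hXY := re_trace_pauliX_add_pauliY_mul_le_one hσ
  rw [magicWitness, smul_mul, add_mul, one_mul, smul_mul, trace_smul, trace_add, trace_smul,
    trace_eq_one_of_mem_stabilizerProjectors hσ, Complex.smul_re, Complex.add_re,
    Complex.one_re, Complex.smul_re, smul_eq_mul, smul_eq_mul]
  calc (1 + 1 / Real.sqrt 2)⁻¹ * (1 + (Real.sqrt 2)⁻¹ * ((pauliX + pauliY) * σ).trace.re)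
      ≤ (1 + 1 / Real.sqrt 2)⁻¹ * (1 + (Real.sqrt 2)⁻¹ * 1) := by gcongr
    _ = 1 := by field_simp

/-- Magic robustness lower bound for the `T` state via the explicit witness
`Y₁ = (I + (X+Y)/√2)/(1 + 1/√2)`: (i) `Y₁` is positive semidefinite, (ii) `Y₁`
is feasible on stabilizer states, (iii) its value on `|T⟩⟨T|` is `4 − 2√2`, and
consequently (iv) the generalized robustness of magic of `|T⟩⟨T|` is at least
`3 − 2√2`. -/
theorem magic_robustness_T_state :
    magicWitness.PosSemidef ∧
      (∀ σ ∈ stabSet, ((magicWitness * σ).trace).re ≤ 1) ∧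
      ((magicWitness * Tproj).trace).re = 4 - 2 * Real.sqrt 2 ∧
      robustness stabSet Tproj ≥ 3 - 2 * Real.sqrt 2 := by
  have hv := star_tState_dotProduct_self
  have hW : magicWitness.PosSemidef := by
    have hs : Real.sqrt 2 ≤ 2 := by
      nlinarith [Real.sq_sqrt (zero_le_two (α := ℝ)), Real.sqrt_nonneg 2]
    rw [magicWitness_eq_smul_Tproj, Tproj_eq_vecMulVec]
    exact (posSemidef_vecMulVec_self_star tState).smul (by linarith)
  have hWL : ∀ σ ∈ stabSet, (magicWitness * σ).trace.re ≤ 1 :=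
    re_trace_mul_le_of_mem_convexHull fun _ ↦ re_trace_magicWitness_mul_le_one
  have hWT : (magicWitness * Tproj).trace.re = 4 - 2 * Real.sqrt 2 := by
    rw [magicWitness_eq_smul_Tproj, smul_mul, Tproj_eq_vecMulVec,
      vecMulVec_self_star_mul_self hv, trace_smul, trace_vecMulVec_self_star hv]
    simp
  refine ⟨hW, hWL, hWT, ?_⟩
  have hR := robustness_ge_of_witness hW hWL
    ⟨1, one_mem_robustnessFeasible_of_pure_qubit hv half_smul_one_mem_stabSet⟩
  rw [← Tproj_eq_vecMulVec, hWT] at hR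
  linarith
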